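/- arXiv:2010.09686 — 6 statements merged into one kernel-verified Lean document; each statement's English description precedes it below -/
import Mathlib

section
/- For any [0,1]-valued random variable X with E[X | G] = μ for a sub-σ-field G, any G-measurable λ taking values in [0,1), and any G-measurable μ̂ ∈ [0,1], we have E[ exp( λ(X − μ) − 4(X − μ̂)² ψ_E(λ) ) | G ] ≤ 1, where ψ_E(λ) := (−log(1−λ) − λ)/4. -/
open MeasureTheory Real

noncomputable def psiE (l : ℝ) : ℝ := (-Real.log (1 - l) - l) / 4

lemma mono_aux {f f' : ℝ → ℝ} {a b : ℝ} (hab : a ≤ b)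
    (hderiv : ∀ x ∈ Set.Icc a b, HasDerivAt f (f' x) x)
    (hpos : ∀ x ∈ Set.Icc a b, 0 ≤ f' x) : f a ≤ f b := by
  have h : MonotoneOn f (Set.Icc a b) := by
    apply monotoneOn_of_deriv_nonneg (convex_Icc a b)
    · exact fun x hx => (hderiv x hx).continuousAt.continuousWithinAt
    · intro x hx
      rw [interior_Icc] at hx
      exact (hderiv x (Set.mem_Icc_of_Ioo hx)).differentiableAt.differentiableWithinAt
    · intro x hx
      rw [interior_Icc] at hx
      rw [(hderiv x (Set.mem_Icc_of_Ioo hx)).deriv]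
      exact hpos x (Set.mem_Icc_of_Ioo hx)
  exact h (Set.left_mem_Icc.2 hab) (Set.right_mem_Icc.2 hab) hab

lemma log_quad (l : ℝ) (h0 : 0 ≤ l) (h1 : l < 1) :
    l + l ^ 2 / 2 ≤ -Real.log (1 - l) := by
  have key : (fun t => -Real.log (1 - t) - t - t ^ 2 / 2) 0
      ≤ (fun t => -Real.log (1 - t) - t - t ^ 2 / 2) l := by
    refine mono_aux (f := fun t => -Real.log (1 - t) - t - t ^ 2 / 2)
      (f' := fun t => 1 / (1 - t) - 1 - t) h0 ?_ ?_
    · intro x hx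
      have hne : 1 - x ≠ 0 := by
        simp only [Set.mem_Icc] at hx; intro h; nlinarith [hx.1, hx.2]
      have h1x : HasDerivAt (fun t : ℝ => 1 - t) (-1) x := by
        exact (hasDerivAt_id' x).const_sub (1:ℝ)
      have hlog : HasDerivAt (fun t : ℝ => Real.log (1 - t)) ((1 - x)⁻¹ * (-1)) x :=
        (Real.hasDerivAt_log hne).comp x h1x
      have hsq : HasDerivAt (fun t : ℝ => t ^ 2 / 2) x x := by
        simpa using (hasDerivAt_pow 2 x).div_const 2
      have := (hlog.neg.sub (hasDerivAt_id x)).sub hsq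
      refine this.congr_deriv ?_
      ring
    · intro x hx
      simp only [Set.mem_Icc] at hx
      have hpos : 0 < 1 - x := by linarith
      show 0 ≤ 1 / (1 - x) - 1 - x
      have heq : 1 / (1 - x) - 1 - x = x ^ 2 / (1 - x) := by
        field_simp; ring
      rw [heq]
      positivity
  simp only [sub_zero, Real.log_one] at key
  linarith [key]

lemma key_ineq (l ξ : ℝ) (hl0 : 0 ≤ l) (hl1 : l < 1) (hξ1 : -1 ≤ ξ) (hξ2 : ξ ≤ 1) :
    Real.exp (l * ξ - 4 * ξ ^ 2 * psiE l) ≤ 1 + l * ξ := by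
  set A : ℝ := -Real.log (1 - l) - l with hA_def
  have h1l : (0:ℝ) < 1 - l := by linarith
  have hA0 : 0 ≤ A := by
    have := Real.log_le_sub_one_of_pos h1l
    simp only [hA_def]; linarith
  have hA : l ^ 2 ≤ 2 * A := by
    have := log_quad l hl0 hl1
    simp only [hA_def]; linarith
  have hposx : ∀ x : ℝ, -1 ≤ x → 0 < 1 + l * x := by
    intro x hx
    nlinarith
  have h1 : 0 < 1 + l * ξ := hposx ξ hξ1
  rw [← Real.exp_log h1, Real.exp_le_exp]
  have hps : 4 * ξ ^ 2 * psiE l = ξ ^ 2 * A := by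
    simp only [psiE, hA_def]; ring
  rw [hps]
  -- reduce to 0 ≤ F ξ with F x = log (1 + l*x) - l*x + A*x^2
  set F : ℝ → ℝ := fun x => Real.log (1 + l * x) - l * x + A * x ^ 2 with hF_def
  have hF : ∀ x ∈ Set.Icc (-1:ℝ) 1, HasDerivAt F (x * (2 * A - l ^ 2 / (1 + l * x))) x := by
    intro x hx
    simp only [Set.mem_Icc] at hx
    have hne : 1 + l * x ≠ 0 := ne_of_gt (hposx x hx.1)
    have hin : HasDerivAt (fun t : ℝ => 1 + l * t) l x := by
      exact (((hasDerivAt_id' x).const_mul l).const_add (1:ℝ)).congr_deriv (by ring)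
    have hlog : HasDerivAt (fun t : ℝ => Real.log (1 + l * t)) ((1 + l * x)⁻¹ * l) x :=
      by have h := (Real.hasDerivAt_log hne).comp x hin; exact h
    have hlin : HasDerivAt (fun t : ℝ => l * t) l x := by
      simpa using (hasDerivAt_id x).const_mul l
    have hsq : HasDerivAt (fun t : ℝ => A * t ^ 2) (A * (2 * x)) x := by
      simpa using (hasDerivAt_pow 2 x).const_mul A
    have := (hlog.sub hlin).add hsq
    refine this.congr_deriv ?_
    field_simp
    ring
  have hF0 : F 0 = 0 := by simp [hF_def]
  have goal : 0 ≤ F ξ := by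
    rcases le_or_gt 0 ξ with hc | hc
    · -- ξ ≥ 0 : F monotone on [0, ξ]
      have := mono_aux (f := F) (f' := fun x => x * (2 * A - l ^ 2 / (1 + l * x))) hc
        (fun x hx => hF x ⟨by linarith [hx.1], le_trans hx.2 hξ2⟩)
        (fun x hx => by
          have hx0 : 0 ≤ x := hx.1
          have hdle : l ^ 2 / (1 + l * x) ≤ l ^ 2 :=
            div_le_self (sq_nonneg l) (by nlinarith)
          have : 0 ≤ 2 * A - l ^ 2 / (1 + l * x) := by linarith
          positivity)
      rw [hF0] at this; exact this
    · rcases le_or_gt (l ^ 2 / (1 + l * ξ)) (2 * A) with h2 | h2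
      · -- F antitone on [ξ, 0]: use -F
        have := mono_aux (f := fun x => -F x)
          (f' := fun x => -(x * (2 * A - l ^ 2 / (1 + l * x)))) hc.le
          (fun x hx => (hF x ⟨le_trans hξ1 hx.1, by linarith [hx.2]⟩).neg)
          (fun x hx => by
            have hx0 : x ≤ 0 := hx.2
            have hd : l ^ 2 / (1 + l * x) ≤ l ^ 2 / (1 + l * ξ) := by
              apply div_le_div_of_nonneg_left (sq_nonneg l) (hposx ξ hξ1)
              nlinarith [hx.1]
            have h3 : 0 ≤ 2 * A - l ^ 2 / (1 + l * x) := by linarith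
            nlinarith)
        simp only [hF0, neg_zero] at this
        linarith
      · -- F monotone on [-1, ξ]
        have hFm1 : F (-1) = 0 := by
          simp only [hF_def]
          have : 1 + l * (-1) = 1 - l := by ring
          rw [this]; ring
        have := mono_aux (f := F) (f' := fun x => x * (2 * A - l ^ 2 / (1 + l * x))) hξ1
          (fun x hx => hF x ⟨hx.1, by linarith [hx.2]⟩)
          (fun x hx => by
            have hx0 : x ≤ ξ := hx.2
            have hd : l ^ 2 / (1 + l * ξ) ≤ l ^ 2 / (1 + l * x) := by
              apply div_le_div_of_nonneg_left (sq_nonneg l) (hposx x hx.1)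
              nlinarith
            have h3 : 2 * A - l ^ 2 / (1 + l * x) ≤ 0 := by linarith
            nlinarith [hx.1])
        rw [hFm1] at this; exact this
  simp only [hF_def] at goal
  linarith

lemma psiE_nonneg (l : ℝ) (h0 : 0 ≤ l) (h1 : l < 1) : 0 ≤ psiE l := by
  have h1l : (0:ℝ) < 1 - l := by linarith
  have := Real.log_le_sub_one_of_pos h1l
  simp only [psiE]
  linarith

set_option maxHeartbeats 1000000 in
/-- The empirical-Bernstein factor is an e-value: for a [0,1]-valued X with
    E[X ∣ G] = μ, a G-measurable λ ∈ [0,1) and a G-measurable μ̂ ∈ [0,1],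
    E[exp(λ(X − μ) − 4(X − μ̂)²ψ_E(λ)) ∣ G] ≤ 1. -/
theorem empirical_bernstein_evalue
    {Ω : Type*} (G : MeasurableSpace Ω) {m0 : MeasurableSpace Ω} (P : Measure Ω) [IsProbabilityMeasure P]
    (hG : G ≤ m0)
    (X : Ω → ℝ) (hX : Measurable X) (hXbdd : ∀ ω, X ω ∈ Set.Icc (0 : ℝ) 1)
    (μ : ℝ) (hmean : P[X | G] =ᵐ[P] fun _ => μ)
    (lam : Ω → ℝ) (hlam : StronglyMeasurable[G] lam)
    (hlam' : ∀ ω, lam ω ∈ Set.Ico (0 : ℝ) 1)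
    (muhat : Ω → ℝ) (hmuhat : StronglyMeasurable[G] muhat)
    (hmuhat' : ∀ ω, muhat ω ∈ Set.Icc (0 : ℝ) 1) :
    P[fun ω => Real.exp (lam ω * (X ω - μ) - 4 * (X ω - muhat ω) ^ 2 * psiE (lam ω)) | G]
      ≤ᵐ[P] fun _ => 1 := by
  classical
  have hXm0 : Measurable[m0] X := hX
  have hlamM : Measurable[m0] lam := (hlam.mono hG).measurable
  have hmuhatM : Measurable[m0] muhat := (hmuhat.mono hG).measurable
  set c : Ω → ℝ := fun ω => Real.exp (lam ω * (muhat ω - μ)) with hc_def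
  set g : Ω → ℝ := fun ω => c ω * (1 - lam ω * muhat ω) with hg_def
  set b : Ω → ℝ := fun ω => c ω * lam ω with hb_def
  set L : Ω → ℝ :=
    fun ω => Real.exp (lam ω * (X ω - μ) - 4 * (X ω - muhat ω) ^ 2 * psiE (lam ω)) with hL_def
  set C : ℝ := Real.exp (1 + |μ|) with hC_def
  have habs1 : -|μ| ≤ μ := neg_abs_le μ
  have habs2 : μ ≤ |μ| := le_abs_self μ
  -- generic product bound
  have hmulB : ∀ a d B : ℝ, 0 ≤ a → a ≤ 1 → d ≤ B → 0 ≤ B → a * d ≤ B := by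
    intro a d B ha ha1 hd hB
    rcases le_or_gt d 0 with h | h
    · nlinarith
    · nlinarith
  have hc_le : ∀ ω, c ω ≤ C := by
    intro ω
    apply Real.exp_le_exp.2
    have h1 := hlam' ω; have h2 := hmuhat' ω
    simp only [Set.mem_Ico, Set.mem_Icc] at h1 h2
    exact hmulB _ _ _ h1.1 h1.2.le (by linarith [h2.2]) (by positivity)
  have hL_le : ∀ ω, L ω ≤ C := by
    intro ω
    apply Real.exp_le_exp.2
    have h1 := hlam' ω; have h2 := hmuhat' ω; have h3 := hXbdd ω
    simp only [Set.mem_Ico, Set.mem_Icc] at h1 h2 h3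
    have hψ : 0 ≤ 4 * (X ω - muhat ω) ^ 2 * psiE (lam ω) :=
      mul_nonneg (mul_nonneg (by norm_num) (sq_nonneg _)) (psiE_nonneg _ h1.1 h1.2)
    have : lam ω * (X ω - μ) ≤ 1 + |μ| :=
      hmulB _ _ _ h1.1 h1.2.le (by linarith [h3.2]) (by positivity)
    linarith
  -- pointwise key inequality
  have hpt : ∀ ω, L ω ≤ g ω + b ω * X ω := by
    intro ω
    have h1 := hlam' ω; have h2 := hmuhat' ω; have h3 := hXbdd ω
    simp only [Set.mem_Ico, Set.mem_Icc] at h1 h2 h3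
    have hk := key_ineq (lam ω) (X ω - muhat ω) h1.1 h1.2
      (by linarith [h3.1, h2.2]) (by linarith [h3.2, h2.1])
    have hsplit : L ω = c ω * Real.exp
        (lam ω * (X ω - muhat ω) - 4 * (X ω - muhat ω) ^ 2 * psiE (lam ω)) := by
      simp only [hL_def, hc_def, ← Real.exp_add]
      congr 1
      ring
    rw [hsplit]
    calc c ω * Real.exp (lam ω * (X ω - muhat ω) - 4 * (X ω - muhat ω) ^ 2 * psiE (lam ω))
        ≤ c ω * (1 + lam ω * (X ω - muhat ω)) :=
          mul_le_mul_of_nonneg_left hk (Real.exp_pos _).le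
      _ = g ω + b ω * X ω := by simp only [hg_def, hb_def]; ring
  -- measurability
  have hcM : Measurable[m0] c := (hlamM.mul (hmuhatM.sub measurable_const)).exp
  have hgM : Measurable[m0] g := hcM.mul (measurable_const.sub (hlamM.mul hmuhatM))
  have hbM : Measurable[m0] b := hcM.mul hlamM
  have hψM : Measurable[m0] (fun ω => psiE (lam ω)) := by
    unfold psiE
    exact (((measurable_const.sub hlamM).log).neg.sub hlamM).div_const 4
  have hq1 : Measurable[m0] (fun ω => lam ω * (X ω - μ)) :=
    hlamM.mul (hXm0.sub measurable_const)
  have hq2 : Measurable[m0] (fun ω => 4 * (X ω - muhat ω) ^ 2 * psiE (lam ω)) :=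
    (measurable_const.mul ((hXm0.sub hmuhatM).pow_const 2)).mul hψM
  have hLM : Measurable[m0] L := (hq1.sub hq2).exp
  -- integrability
  have hint : ∀ (f : Ω → ℝ), Measurable[m0] f → (∀ ω, |f ω| ≤ C) → Integrable f P := by
    intro f hf hb'
    refine Integrable.mono' (integrable_const C) hf.aestronglyMeasurable ?_
    exact ae_of_all _ fun ω => by rw [Real.norm_eq_abs]; exact hb' ω
  have hL_int : Integrable L P :=
    hint L hLM fun ω => by rw [abs_of_pos (Real.exp_pos _)]; exact hL_le ω
  have hg_int : Integrable g P := by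
    refine hint g hgM fun ω => ?_
    have h1 := hlam' ω; have h2 := hmuhat' ω
    simp only [Set.mem_Ico, Set.mem_Icc] at h1 h2
    have hcpos := Real.exp_pos (lam ω * (muhat ω - μ))
    have h4 : 0 ≤ 1 - lam ω * muhat ω := by nlinarith
    have h5 : 1 - lam ω * muhat ω ≤ 1 := by nlinarith
    rw [abs_of_nonneg (mul_nonneg hcpos.le h4)]
    calc c ω * (1 - lam ω * muhat ω) ≤ c ω * 1 := by nlinarith
      _ ≤ C := by rw [mul_one]; exact hc_le ω
  have hbX_int : Integrable (fun ω => b ω * X ω) P := by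
    refine hint _ (hbM.mul hXm0) fun ω => ?_
    have h1 := hlam' ω; have h3 := hXbdd ω
    simp only [Set.mem_Ico, Set.mem_Icc] at h1 h3
    have hcpos := Real.exp_pos (lam ω * (muhat ω - μ))
    have hb0 : 0 ≤ b ω := mul_nonneg hcpos.le h1.1
    rw [abs_of_nonneg (mul_nonneg hb0 h3.1)]
    have : b ω * X ω ≤ c ω := by
      simp only [hb_def]
      have hlx : lam ω * X ω ≤ 1 := by nlinarith
      calc c ω * lam ω * X ω = c ω * (lam ω * X ω) := by ring
        _ ≤ c ω * 1 := mul_le_mul_of_nonneg_left hlx hcpos.le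
        _ = c ω := mul_one _
    linarith [hc_le ω]
  have hX_int : Integrable X P := by
    refine hint X hXm0 fun ω => ?_
    have h3 := hXbdd ω; simp only [Set.mem_Icc] at h3
    rw [abs_of_nonneg h3.1]
    have : (1:ℝ) ≤ C := by
      rw [hC_def, show (1:ℝ) = Real.exp 0 by simp]
      exact Real.exp_le_exp.2 (by positivity)
    linarith
  -- G-strongly-measurable
  have hc_smG : StronglyMeasurable[G] c :=
    Real.continuous_exp.comp_stronglyMeasurable (hlam.mul (hmuhat.sub stronglyMeasurable_const))
  have hg_smG : StronglyMeasurable[G] g :=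
    hc_smG.mul (stronglyMeasurable_const.sub (hlam.mul hmuhat))
  have hb_smG : StronglyMeasurable[G] b := hc_smG.mul hlam
  -- conditional expectation manipulation
  have step1 : P[L|G] ≤ᵐ[P] P[fun ω => g ω + b ω * X ω|G] :=
    condExp_mono hL_int (hg_int.add hbX_int) (ae_of_all _ hpt)
  have h2a : P[fun ω => g ω + b ω * X ω|G] =ᵐ[P] P[g|G] + P[fun ω => b ω * X ω|G] :=
    condExp_add hg_int hbX_int G
  have h2b : P[g|G] = g := condExp_of_stronglyMeasurable hG hg_smG hg_int
  have h2c : P[fun ω => b ω * X ω|G] =ᵐ[P] fun ω => b ω * (P[X|G]) ω :=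
    condExp_mul_of_stronglyMeasurable_left hb_smG hbX_int hX_int
  have hfinal : ∀ ω, g ω + b ω * μ ≤ 1 := by
    intro ω
    have he := Real.add_one_le_exp (lam ω * (μ - muhat ω))
    calc g ω + b ω * μ = c ω * (1 + lam ω * (μ - muhat ω)) := by
          simp only [hg_def, hb_def]; ring
      _ ≤ c ω * Real.exp (lam ω * (μ - muhat ω)) :=
          mul_le_mul_of_nonneg_left (by linarith) (Real.exp_pos _).le
      _ = Real.exp (lam ω * (muhat ω - μ) + lam ω * (μ - muhat ω)) := (Real.exp_add _ _).symm
      _ = 1 := by rw [show lam ω * (muhat ω - μ) + lam ω * (μ - muhat ω) = 0 by ring,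
          Real.exp_zero]
  filter_upwards [step1, h2a, h2c, hmean] with ω e1 e2 e3 e4
  have : (P[fun ω => g ω + b ω * X ω|G]) ω = g ω + b ω * μ := by
    rw [e2]
    simp only [Pi.add_apply, h2b, e3, e4]
  calc (P[L|G]) ω ≤ (P[fun ω => g ω + b ω * X ω|G]) ω := e1
    _ = g ω + b ω * μ := this
    _ ≤ 1 := hfinal ω
end

section
/- For any λ ∈ [0,1) and any y ≥ −1, it holds that log(1 + λy) ≥ λy − 4ψ_E(λ)·y², where ψ_E(λ) = (−log(1−λ) − λ)/4. Equivalently, exp(λy − y²(−log(1−λ) − λ)) ≤ 1 + λy. -/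
/-! For fixed `y ≥ -1`, the difference of the two sides, as a function of `λ`, vanishes at
`λ = 0` and has derivative `λ²y²(1 + y)/((1 + λy)(1 - λ)) ≥ 0` on `[0, 1)`. -/

open Real

noncomputable def fanGap (y t : ℝ) : ℝ :=
  log (1 + t * y) - t * y - y ^ 2 * (log (1 - t) + t)

lemma fanGap_zero (y : ℝ) : fanGap y 0 = 0 := by
  simp [fanGap]

lemma one_add_mul_pos {t y : ℝ} (ht₀ : 0 ≤ t) (ht₁ : t < 1) (hy : -1 ≤ y) : 0 < 1 + t * y := by
  nlinarith

lemma hasDerivAt_fanGap {y t : ℝ} (hty : 0 < 1 + t * y) (ht : t < 1) :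
    HasDerivAt (fanGap y) (t ^ 2 * y ^ 2 * (y + 1) / ((1 + t * y) * (1 - t))) t := by
  have hlog₁ : HasDerivAt (fun s => log (1 + s * y)) (y / (1 + t * y)) t := by
    simpa using (((hasDerivAt_id t).mul_const y).const_add 1).log hty.ne'
  have hlog₂ : HasDerivAt (fun s => log (1 - s)) (-1 / (1 - t)) t := by
    simpa using ((hasDerivAt_id t).const_sub 1).log (sub_pos.2 ht).ne'
  refine ((hlog₁.sub ((hasDerivAt_id t).mul_const y)).sub
    ((hlog₂.add (hasDerivAt_id t)).const_mul (y ^ 2))).congr_deriv ?_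
  have h₁ : 1 + y * t ≠ 0 := mul_comm t y ▸ hty.ne'
  have h₂ : 1 - t ≠ 0 := (sub_pos.2 ht).ne'
  field_simp
  ring

lemma monotoneOn_fanGap {y : ℝ} (hy : -1 ≤ y) : MonotoneOn (fanGap y) (Set.Ico 0 1) := by
  have hderiv : ∀ t ∈ Set.Ico (0 : ℝ) 1, HasDerivAt (fanGap y)
      (t ^ 2 * y ^ 2 * (y + 1) / ((1 + t * y) * (1 - t))) t :=
    fun t ht => hasDerivAt_fanGap (one_add_mul_pos ht.1 ht.2 hy) ht.2
  refine monotoneOn_of_hasDerivWithinAt_nonneg (convex_Ico 0 1)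
    (fun t ht => (hderiv t ht).continuousAt.continuousWithinAt)
    (fun t ht => (hderiv t (interior_subset ht)).hasDerivWithinAt) fun t ht => ?_
  obtain ⟨ht₀, ht₁⟩ := interior_subset (s := Set.Ico (0 : ℝ) 1) ht
  have hty : 0 < 1 + t * y := one_add_mul_pos ht₀ ht₁ hy
  have hy₁ : 0 ≤ y + 1 := by linarith
  have ht : 0 < 1 - t := by linarith
  positivity

lemma fanGap_nonneg {y t : ℝ} (ht : t ∈ Set.Ico (0 : ℝ) 1) (hy : -1 ≤ y) : 0 ≤ fanGap y t :=
  fanGap_zero y ▸ monotoneOn_fanGap hy ⟨le_rfl, one_pos⟩ ht ht.1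

/-- Fan's inequality: for λ ∈ [0,1) and y ≥ −1,
    log(1 + λy) ≥ λy − 4ψ_E(λ)y²; equivalently exp(λy − y²(−log(1−λ) − λ)) ≤ 1 + λy. -/
theorem fan_inequality (lam y : ℝ) (hlam : lam ∈ Set.Ico (0 : ℝ) 1) (hy : -1 ≤ y) :
    lam * y - 4 * psiE lam * y ^ 2 ≤ Real.log (1 + lam * y) ∧
    Real.exp (lam * y - y ^ 2 * (-Real.log (1 - lam) - lam)) ≤ 1 + lam * y := by
  have hgap : lam * y - y ^ 2 * (-Real.log (1 - lam) - lam) ≤ Real.log (1 + lam * y) := by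
    have hnonneg := fanGap_nonneg hlam hy
    unfold fanGap at hnonneg
    linarith
  refine ⟨?_, ?_⟩
  · convert hgap using 2
    unfold psiE
    ring
  · calc Real.exp (lam * y - y ^ 2 * (-Real.log (1 - lam) - lam))
        ≤ Real.exp (Real.log (1 + lam * y)) := Real.exp_le_exp.2 hgap
      _ = 1 + lam * y := Real.exp_log (one_add_mul_pos hlam.1 hlam.2 hy)
end

section
/- Let m ∈ (0,1). If y ≥ −m then for any λ ∈ [0, 1/m), log(1 + λy) ≥ λy + (y²/m²)(log(1 − mλ) + mλ). If y ≤ 1 − m then for any λ ∈ (−1/(1−m), 0], log(1 + λy) ≥ λy + (y²/(1−m)²)(log(1 + (1−m)λ) − (1−m)λ). -/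
open Real Set

/-!
The function `f x = (log (1 + x) - x) / x ^ 2`, set to `-1/2` at `0`, is increasing on `(-1, ∞)`.
Away from `0` its derivative is `x (u - u⁻¹ - 2 log u) / x ^ 4` with `u = 1 + x`, which is
nonnegative because `(u - u⁻¹) / 2 = sinh (log u)` and `sinh t - t` has the sign of `t`. Across `0`
one compares with `-1/2`, using that `log (1 + x) - x + x ^ 2 / 2` is increasing.

Both inequalities are `f (k λ) ≤ f (λ y)` multiplied by `(λ y) ^ 2`, with `k = -m`, resp.
`k = 1 - m`; the ranges of `y` and `λ` are exactly what makes `-1 < k λ ≤ λ y`.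
-/

theorem monotoneOn_of_hasDerivAt_nonneg {s : Set ℝ} (hs : Convex ℝ s) {f f' : ℝ → ℝ}
    (hf : ∀ x ∈ s, HasDerivAt f (f' x) x) (hf' : ∀ x ∈ s, 0 ≤ f' x) : MonotoneOn f s :=
  monotoneOn_of_hasDerivWithinAt_nonneg hs
    (fun x hx => (hf x hx).continuousAt.continuousWithinAt)
    (fun x hx => (hf x (interior_subset hx)).hasDerivWithinAt)
    (fun x hx => hf' x (interior_subset hx))

theorem log_le_half_sub_inv {u : ℝ} (hu : 1 ≤ u) : log u ≤ (u - u⁻¹) / 2 := by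
  rw [← sinh_log (by linarith)]
  exact self_le_sinh_iff.2 (log_nonneg hu)

theorem half_sub_inv_le_log {u : ℝ} (hu₀ : 0 < u) (hu₁ : u ≤ 1) : (u - u⁻¹) / 2 ≤ log u := by
  rw [← sinh_log hu₀]
  exact sinh_le_self_iff.2 (log_nonpos hu₀.le hu₁)

theorem hasDerivAt_log_one_add {x : ℝ} (hx : -1 < x) :
    HasDerivAt (fun t => log (1 + t)) (1 + x)⁻¹ x := by
  simpa using ((hasDerivAt_id x).const_add 1).log (by dsimp; linarith)

theorem monotoneOn_log_one_add_sub_add_sq_div_two :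
    MonotoneOn (fun t => log (1 + t) - t + t ^ 2 / 2) (Ioi (-1)) := by
  refine monotoneOn_of_hasDerivAt_nonneg (convex_Ioi _) (f' := fun x => x ^ 2 / (1 + x))
    (fun x hx => ?_) (fun x hx => div_nonneg (sq_nonneg x) (by linarith [mem_Ioi.1 hx]))
  have hx' : 1 + x ≠ 0 := by linarith [mem_Ioi.1 hx]
  refine (((hasDerivAt_log_one_add hx).sub (hasDerivAt_id' x)).add
    ((hasDerivAt_pow 2 x).div_const 2)).congr_deriv ?_
  field_simp
  ring

theorem log_one_add_sub_le_neg_sq_div_two {x : ℝ} (hx₁ : -1 < x) (hx₀ : x ≤ 0) :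
    log (1 + x) - x ≤ -(x ^ 2 / 2) := by
  have := monotoneOn_log_one_add_sub_add_sq_div_two hx₁ (by norm_num : (0 : ℝ) ∈ Ioi (-1)) hx₀
  norm_num at this
  linarith

theorem neg_sq_div_two_le_log_one_add_sub {x : ℝ} (hx : 0 ≤ x) :
    -(x ^ 2 / 2) ≤ log (1 + x) - x := by
  have := monotoneOn_log_one_add_sub_add_sq_div_two (by norm_num : (0 : ℝ) ∈ Ioi (-1))
    (mem_Ioi.2 (by linarith)) hx
  norm_num at this
  linarith

-- `-1/2` is the limit of the ratio at `0`.
noncomputable def fanRatio (x : ℝ) : ℝ :=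
  if x = 0 then -1 / 2 else (log (1 + x) - x) / x ^ 2

theorem log_one_add_sub_eq_sq_mul_fanRatio (x : ℝ) : log (1 + x) - x = x ^ 2 * fanRatio x := by
  by_cases hx : x = 0
  · simp [hx]
  · rw [fanRatio, if_neg hx]
    field_simp

theorem fanRatio_le_neg_half {x : ℝ} (hx₁ : -1 < x) (hx₀ : x ≤ 0) : fanRatio x ≤ -1 / 2 := by
  rcases hx₀.lt_or_eq with hx₀ | rfl
  · rw [fanRatio, if_neg hx₀.ne, div_le_iff₀ (sq_pos_of_neg hx₀)]
    linarith [log_one_add_sub_le_neg_sq_div_two hx₁ hx₀.le]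
  · simp [fanRatio]

theorem neg_half_le_fanRatio {x : ℝ} (hx : 0 ≤ x) : -1 / 2 ≤ fanRatio x := by
  rcases hx.lt_or_eq with hx | rfl
  · rw [fanRatio, if_neg hx.ne', le_div_iff₀ (by positivity)]
    linarith [neg_sq_div_two_le_log_one_add_sub hx.le]
  · simp [fanRatio]

theorem monotoneOn_fanRatio_of_subset {s : Set ℝ} (hs : Convex ℝ s) (hs₁ : s ⊆ Ioi (-1))
    (hs₀ : (0 : ℝ) ∉ s) : MonotoneOn fanRatio s := by
  refine monotoneOn_of_hasDerivAt_nonneg hs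
    (f' := fun x => x * ((1 + x) - (1 + x)⁻¹ - 2 * log (1 + x)) / (x ^ 2) ^ 2)
    (fun x hx => ?_) (fun x hx => ?_)
  · have hx₁ : -1 < x := hs₁ hx
    have hx₀ : x ≠ 0 := fun h => hs₀ (h ▸ hx)
    have hfan : fanRatio =ᶠ[nhds x] fun t => (log (1 + t) - t) / t ^ 2 :=
      (eventually_ne_nhds hx₀).mono fun t ht => if_neg ht
    refine ((((hasDerivAt_log_one_add hx₁).sub (hasDerivAt_id' x)).div (hasDerivAt_pow 2 x)
      (pow_ne_zero 2 hx₀)).congr_of_eventuallyEq hfan).congr_deriv ?_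
    have : 1 + x ≠ 0 := by linarith
    simp only [Pi.sub_apply]
    field_simp
    ring
  · have hx₁ : -1 < x := hs₁ hx
    refine div_nonneg ?_ (by positivity)
    rcases le_total 0 x with hx₀ | hx₀
    · have := log_le_half_sub_inv (u := 1 + x) (by linarith)
      exact mul_nonneg hx₀ (by linarith)
    · have := half_sub_inv_le_log (u := 1 + x) (by linarith) (by linarith)
      exact mul_nonneg_of_nonpos_of_nonpos hx₀ (by linarith)

theorem monotoneOn_fanRatio : MonotoneOn fanRatio (Ioi (-1)) := by
  intro b hb a ha hba
  rcases lt_or_ge b 0 with hb₀ | hb₀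
  · rcases lt_or_ge a 0 with ha₀ | ha₀
    · exact monotoneOn_fanRatio_of_subset (convex_Ioo (-1) 0) Ioo_subset_Ioi_self
        (by simp) ⟨hb, hb₀⟩ ⟨ha, ha₀⟩ hba
    · exact (fanRatio_le_neg_half hb hb₀.le).trans (neg_half_le_fanRatio ha₀)
  · rcases hb₀.lt_or_eq with hb₀ | rfl
    · exact monotoneOn_fanRatio_of_subset (convex_Ioi 0) (Ioi_subset_Ioi (by norm_num))
        (by simp) hb₀ (hb₀.trans_le hba) hba
    · simpa [fanRatio] using neg_half_le_fanRatio hba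

theorem fan_inequality_s3 {k lam y : ℝ} (hk : k ≠ 0) (hc : -1 < k * lam) (hca : k * lam ≤ lam * y) :
    lam * y + y ^ 2 / k ^ 2 * (log (1 + k * lam) - k * lam) ≤ log (1 + lam * y) :=
  calc lam * y + y ^ 2 / k ^ 2 * (log (1 + k * lam) - k * lam)
      = lam * y + (lam * y) ^ 2 * fanRatio (k * lam) := by
        rw [log_one_add_sub_eq_sq_mul_fanRatio]; field_simp
    _ ≤ lam * y + (lam * y) ^ 2 * fanRatio (lam * y) := by
        gcongr
        exact monotoneOn_fanRatio hc (hc.trans_le hca) hca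
    _ = log (1 + lam * y) := by rw [← log_one_add_sub_eq_sq_mul_fanRatio]; ring

/-- Extension of Fan's inequality to the full betting range (Lemma: extendedFan). -/
theorem extended_fan (m : ℝ) (hm : m ∈ Set.Ioo (0 : ℝ) 1) :
    (∀ y : ℝ, -m ≤ y → ∀ lam : ℝ, lam ∈ Set.Ico (0 : ℝ) (1 / m) →
      lam * y + (y ^ 2 / m ^ 2) * (Real.log (1 - m * lam) + m * lam)
        ≤ Real.log (1 + lam * y)) ∧
    (∀ y : ℝ, y ≤ 1 - m → ∀ lam : ℝ, lam ∈ Set.Ioc (-(1 / (1 - m))) (0 : ℝ) →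
      lam * y + (y ^ 2 / (1 - m) ^ 2) * (Real.log (1 + (1 - m) * lam) - (1 - m) * lam)
        ≤ Real.log (1 + lam * y)) := by
  obtain ⟨hm₀, hm₁⟩ := hm
  constructor
  · rintro y hy lam ⟨hlam₀, hlam₁⟩
    have hc : -1 < -m * lam := by
      rw [lt_div_iff₀ hm₀] at hlam₁; linarith
    simpa [neg_mul, ← sub_eq_add_neg] using
      fan_inequality_s3 (y := y) (neg_ne_zero.2 hm₀.ne') hc (by nlinarith)
  · rintro y hy lam ⟨hlam₁, hlam₀⟩
    have hc : -1 < (1 - m) * lam := by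
      rw [neg_lt, lt_div_iff₀ (by linarith)] at hlam₁; linarith
    exact fan_inequality_s3 (by linarith) hc (by nlinarith)
end

section
/- Fix data x_1, ..., x_t ∈ [0,1] and constants c ∈ [0,1], and nonnegative reals λ̇_1, ..., λ̇_t. Define for m ∈ (0,1]: K⁺(m) = ∏_{i=1}^t (1 + (min(λ̇_i, c/m))(x_i − m)). Then K⁺ is nonnegative and nonincreasing in m on (0,1]. -/
/-!
Since `min L (c / m) * m = min (L * m) c` for `m > 0`, each factor can be rewritten as
`1 + X * min L (c / m) - min (L * m) c`. For `X, L, c ≥ 0` the middle term is nonincreasing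
in `m` and the last one nondecreasing, so the factor is nonincreasing; and it is at least
`1 - c ≥ 0`. A product of nonnegative nonincreasing factors is nonincreasing.
-/

open Set

lemma min_div_mul_sub_eq (L c X : ℝ) {m : ℝ} (hm : 0 < m) :
    min L (c / m) * (X - m) = X * min L (c / m) - min (L * m) c := by
  rw [mul_sub, min_mul_of_nonneg _ _ hm.le, div_mul_cancel₀ _ hm.ne', mul_comm]

lemma antitoneOn_min_div {c : ℝ} (hc : 0 ≤ c) (L : ℝ) :
    AntitoneOn (fun m => min L (c / m)) (Ioi 0) :=
  fun _ ha _ _ hab => min_le_min_left _ (div_le_div_of_nonneg_left hc ha hab)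

lemma monotone_min_mul {L : ℝ} (hL : 0 ≤ L) (c : ℝ) : Monotone (fun m => min (L * m) c) :=
  fun _ _ hab => min_le_min_right _ (mul_le_mul_of_nonneg_left hab hL)

lemma one_add_min_div_mul_sub_nonneg {L c X m : ℝ} (hL : 0 ≤ L) (hc : c ∈ Icc (0 : ℝ) 1)
    (hX : 0 ≤ X) (hm : 0 < m) : 0 ≤ 1 + min L (c / m) * (X - m) := by
  have hmin : 0 ≤ X * min L (c / m) := mul_nonneg hX (le_min hL (div_nonneg hc.1 hm.le))
  rw [min_div_mul_sub_eq L c X hm]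
  linarith [min_le_right (L * m) c, hc.2]

lemma antitoneOn_one_add_min_div_mul_sub {L c X : ℝ} (hL : 0 ≤ L) (hc : 0 ≤ c) (hX : 0 ≤ X) :
    AntitoneOn (fun m => 1 + min L (c / m) * (X - m)) (Ioi 0) := by
  intro a ha b hb hab
  simp only [min_div_mul_sub_eq L c X ha, min_div_mul_sub_eq L c X hb]
  have h₁ := mul_le_mul_of_nonneg_left (antitoneOn_min_div hc L ha hb hab) hX
  have h₂ := monotone_min_mul hL c hab
  linarith

/-- The positive capital process with truncated bets,
    K⁺(m) = ∏ᵢ (1 + min(λ̇ᵢ, c/m)(xᵢ − m)), is nonnegative and nonincreasing in m on (0,1]. -/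
theorem capital_plus_nonneg_antitone (t : ℕ) (x : Fin t → ℝ)
    (hx : ∀ i, x i ∈ Set.Icc (0 : ℝ) 1)
    (c : ℝ) (hc : c ∈ Set.Icc (0 : ℝ) 1)
    (lam : Fin t → ℝ) (hlam : ∀ i, 0 ≤ lam i) :
    (∀ m ∈ Set.Ioc (0 : ℝ) 1, 0 ≤ ∏ i, (1 + min (lam i) (c / m) * (x i - m))) ∧
    AntitoneOn (fun m => ∏ i, (1 + min (lam i) (c / m) * (x i - m)))
      (Set.Ioc (0 : ℝ) 1) := by
  have factor_nonneg : ∀ m ∈ Ioc (0 : ℝ) 1, ∀ i, 0 ≤ 1 + min (lam i) (c / m) * (x i - m) :=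
    fun m hm i => one_add_min_div_mul_sub_nonneg (hlam i) hc (hx i).1 hm.1
  refine ⟨fun m hm => Finset.prod_nonneg fun i _ => factor_nonneg m hm i, ?_⟩
  intro a ha b hb hab
  exact Finset.prod_le_prod (fun i _ => factor_nonneg b hb i) fun i _ =>
    antitoneOn_one_add_min_div_mul_sub (hlam i) hc.1 (hx i).1 ha.1 hb.1 hab
end

section
/- Let X_1, X_2, ... be i.i.d. [0,1]-valued random variables with mean μ and variance σ². Let μ̂_{i} denote running estimates with μ̂_{i} → μ almost surely and |X_i − μ̂_{i-1}| ≤ 1. Then the modified variance estimator σ̂_n² = (1/n)∑_{i=1}^n (X_i − μ̂_{i-1})² converges to σ² almost surely. -/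
open MeasureTheory ProbabilityTheory Filter
open scoped Topology

/-!
Write `(Xᵢ - μ̂ᵢ)² = (Xᵢ - μ)² + eᵢ`. By the strong law of large numbers applied to the i.i.d.
integrable variables `(Xᵢ - μ)²`, the Cesàro means of the first term converge a.s. to `σ²`.
On the event `μ̂ᵢ → μ` the error `eᵢ = (μ - μ̂ᵢ)·2(Xᵢ - μ) + (μ - μ̂ᵢ)²` is a null sequence
times a bounded one plus a null sequence, so it tends to `0`, hence so do its Cesàro means.
-/

open Finset

theorem Filter.Tendsto.cesaro_smul_of_tendsto_sub {E : Type*} [NormedAddCommGroup E]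
    [NormedSpace ℝ E] {u v : ℕ → E} {l : E}
    (hu : Tendsto (fun n : ℕ => (n⁻¹ : ℝ) • ∑ i ∈ range n, u i) atTop (𝓝 l))
    (hvu : Tendsto (fun i => v i - u i) atTop (𝓝 0)) :
    Tendsto (fun n : ℕ => (n⁻¹ : ℝ) • ∑ i ∈ range n, v i) atTop (𝓝 l) := by
  simpa only [← smul_add, ← sum_add_distrib, add_sub_cancel, add_zero] using
    hu.add hvu.cesaro_smul

theorem tendsto_sub_sq_sub_sub_sq {ι : Type*} {l : Filter ι} {x m : ι → ℝ} {μ C : ℝ}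
    (hx : ∀ i, |x i - μ| ≤ C) (hm : Tendsto m l (𝓝 μ)) :
    Tendsto (fun i => (x i - m i) ^ 2 - (x i - μ) ^ 2) l (𝓝 0) := by
  have hnull : Tendsto (fun i => μ - m i) l (𝓝 0) := by simpa using hm.const_sub μ
  have hbdd : IsBoundedUnder (· ≤ ·) l ((‖·‖) ∘ fun i => 2 * (x i - μ)) :=
    isBoundedUnder_of ⟨2 * C, fun i => by
      simpa [abs_mul] using mul_le_mul_of_nonneg_left (hx i) zero_le_two⟩
  have hdecomp : ∀ i, (x i - m i) ^ 2 - (x i - μ) ^ 2 =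
      (μ - m i) * (2 * (x i - μ)) + (μ - m i) ^ 2 := fun i => by ring
  simpa only [hdecomp, add_zero, zero_pow two_ne_zero] using
    (hnull.zero_mul_isBoundedUnder_le hbdd).add (hnull.pow 2)

theorem strong_law_ae_sq_sub_integral {Ω : Type*} {m : MeasurableSpace Ω} {P : Measure Ω}
    [IsFiniteMeasure P] {X : ℕ → Ω → ℝ} (hX : MemLp (X 0) 2 P)
    (hindep : Pairwise fun i j => X i ⟂ᵢ[P] X j) (hident : ∀ i, IdentDistrib (X i) (X 0) P P) :
    ∀ᵐ ω ∂P, Tendsto (fun n : ℕ => (n⁻¹ : ℝ) * ∑ i ∈ range n, (X i ω - P[X 0]) ^ 2) atTop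
      (𝓝 (variance (X 0) P)) := by
  have hf : Measurable fun x : ℝ => (x - P[X 0]) ^ 2 := by fun_prop
  have hSLLN := strong_law_ae_real (fun i ω => (X i ω - P[X 0]) ^ 2)
    (hX.sub (memLp_const _)).integrable_sq (fun _ _ hij => (hindep hij).comp hf hf)
    (fun i => (hident i).comp hf)
  rw [variance_eq_integral hX.aemeasurable]
  simpa only [div_eq_inv_mul] using hSLLN

-- `muhat i` is the estimate μ̂_{i−1} against which the i-th observation is centred.
theorem modified_variance_estimator_consistent_general
    {Ω : Type*} {m0 : MeasurableSpace Ω} (P : Measure Ω) [IsProbabilityMeasure P]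
    (X : ℕ → Ω → ℝ)
    (hXbdd : ∀ i ω, X i ω ∈ Set.Icc (0 : ℝ) 1)
    (hindep : iIndepFun X P)
    (hident : ∀ i, IdentDistrib (X i) (X 0) P P)
    (μ σ2 : ℝ) (hμ : ∫ ω, X 0 ω ∂P = μ) (hσ2 : variance (X 0) P = σ2)
    (muhat : ℕ → Ω → ℝ)
    (hconv : ∀ᵐ ω ∂P, Tendsto (fun i => muhat i ω) atTop (𝓝 μ)) :
    ∀ᵐ ω ∂P, Tendsto
      (fun n : ℕ => (1 / (n : ℝ)) * ∑ i ∈ Finset.range n, (X i ω - muhat i ω) ^ 2)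
      atTop (𝓝 σ2) := by
  have hL2 : MemLp (X 0) 2 P :=
    memLp_of_bounded (.of_forall (hXbdd 0)) (hident 0).aemeasurable_fst.aestronglyMeasurable 2
  have hdev : ∀ i ω, |X i ω - μ| ≤ 1 + |μ| := fun i ω =>
    (abs_sub _ _).trans <| add_le_add_left
      (abs_le.2 ⟨by linarith [(hXbdd i ω).1], (hXbdd i ω).2⟩) _
  have hSLLN := strong_law_ae_sq_sub_integral hL2 (fun _ _ hij => hindep.indepFun hij) hident
  rw [hμ, hσ2] at hSLLN
  filter_upwards [hSLLN, hconv] with ω hω hmuhat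
  simpa only [one_div, smul_eq_mul] using
    hω.cesaro_smul_of_tendsto_sub (tendsto_sub_sq_sub_sub_sq (hdev · ω) hmuhat)

/-- Consistency of the modified running variance estimator: for i.i.d. [0,1]-valued
    observations with mean μ and variance σ², if μ̂ᵢ → μ a.s. and |Xᵢ − μ̂_{i−1}| ≤ 1,
    then (1/n)∑_{i=1}^n (Xᵢ − μ̂_{i−1})² → σ² almost surely.
    (Here `muhat i` denotes the estimate μ̂_{i−1} used for the i-th observation.) -/
theorem modified_variance_estimator_consistent
    {Ω : Type*} {m0 : MeasurableSpace Ω} (P : Measure Ω) [IsProbabilityMeasure P]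
    (X : ℕ → Ω → ℝ) (hXmeas : ∀ i, Measurable (X i))
    (hXbdd : ∀ i ω, X i ω ∈ Set.Icc (0 : ℝ) 1)
    (hindep : iIndepFun X P)
    (hident : ∀ i, IdentDistrib (X i) (X 0) P P)
    (μ σ2 : ℝ) (hμ : ∫ ω, X 0 ω ∂P = μ) (hσ2 : variance (X 0) P = σ2)
    (muhat : ℕ → Ω → ℝ)
    (hconv : ∀ᵐ ω ∂P, Tendsto (fun i => muhat i ω) atTop (𝓝 μ))
    (hbd : ∀ i ω, |X i ω - muhat i ω| ≤ 1) :
    ∀ᵐ ω ∂P, Tendsto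
      (fun n : ℕ => (1 / (n : ℝ)) * ∑ i ∈ Finset.range n, (X i ω - muhat i ω) ^ 2)
      atTop (𝓝 σ2) :=
  modified_variance_estimator_consistent_general (m0 := m0) P X hXbdd hindep hident μ σ2 hμ hσ2
    muhat hconv
end

section
/- For every x, m ∈ [0,1] and λ ∈ ℝ, there exists γ ∈ ℝ (depending only on m and λ), namely γ = e^{−mλ − λ²/8}(e^λ − 1) when λ ≥ 0, such that exp(λ(x − m) − λ²/8) ≤ 1 + γ(x − m) for all x ∈ [0,1]. -/
/-!
`x ↦ exp (λ (x - m) - λ² / 8)` is convex, so on `[0, 1]` it lies below its chord, a line of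
slope `γ`. That chord lies below `1 + γ (x - m)` exactly when
`1 - m + m eᵗ ≤ exp (m t + t² / 8)` at `t = λ`, which is Hoeffding's lemma for a Bernoulli
variable of mean `m`.
-/

open Real MeasureTheory ProbabilityTheory

lemma one_sub_add_mul_exp_le_exp (m : ℝ) (hm : m ∈ Set.Icc (0 : ℝ) 1) (t : ℝ) :
    1 - m + m * exp t ≤ exp (m * t + t ^ 2 / 8) := by
  set μ : Measure ℝ := Ber(1, 0, ⟨m, hm⟩)
  have hsupp : ∀ᵐ z ∂μ, z ∈ Set.Icc (0 : ℝ) 1 := by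
    rw [ae_iff]
    exact bernoulliMeasure_apply_of_notMem_of_notMem _ measurableSet_Icc.compl (by simp) (by simp)
  have hoeffding := (hasSubgaussianMGF_of_mem_Icc aemeasurable_id hsupp).mgf_le t
  have hmgf : mgf (fun z => id z - μ[id]) μ t = exp (-(m * t)) * (1 - m + m * exp t) := by
    simp only [mgf, μ, integral_bernoulliMeasure, id, smul_eq_mul]
    rw [show t * (1 - (m * 1 + (1 - m) * 0)) = -(m * t) + t by ring,
      show t * (0 - (m * 1 + (1 - m) * 0)) = -(m * t) by ring, exp_add]
    ring
  have hparam : ((‖(1 : ℝ) - 0‖₊ / 2) ^ 2 : NNReal) * t ^ 2 / 2 = t ^ 2 / 8 := by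
    norm_num; ring
  rw [hmgf, hparam] at hoeffding
  calc 1 - m + m * exp t = exp (m * t) * (exp (-(m * t)) * (1 - m + m * exp t)) := by
        rw [← mul_assoc, ← exp_add, add_neg_cancel, exp_zero, one_mul]
    _ ≤ exp (m * t) * exp (t ^ 2 / 8) := by gcongr
    _ = exp (m * t + t ^ 2 / 8) := (exp_add _ _).symm

lemma exp_mul_le_one_sub_add_mul_exp (t : ℝ) {x : ℝ} (hx : x ∈ Set.Icc (0 : ℝ) 1) :
    exp (t * x) ≤ 1 - x + x * exp t := by
  simpa [smul_eq_mul, mul_comm] using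
    convexOn_exp.2 (Set.mem_univ 0) (Set.mem_univ t) (sub_nonneg.2 hx.2) hx.1 (sub_add_cancel 1 x)

/-- The Hoeffding supermartingale factor is dominated by a betting (linear) payoff:
    for every m ∈ [0,1] and λ ∈ ℝ there is γ (equal to
    e^{−mλ−λ²/8}(e^λ − 1) when λ ≥ 0) with
    exp(λ(x−m) − λ²/8) ≤ 1 + γ(x−m) for all x ∈ [0,1]. -/
theorem capital_dominates_hoeffding (m : ℝ) (hm : m ∈ Set.Icc (0 : ℝ) 1) (lam : ℝ) :
    ∃ γ : ℝ,
      (0 ≤ lam → γ = Real.exp (-m * lam - lam ^ 2 / 8) * (Real.exp lam - 1)) ∧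
      ∀ x ∈ Set.Icc (0 : ℝ) 1,
        Real.exp (lam * (x - m) - lam ^ 2 / 8) ≤ 1 + γ * (x - m) := by
  set c := exp (-m * lam - lam ^ 2 / 8)
  refine ⟨c * (exp lam - 1), fun _ => rfl, fun x hx => ?_⟩
  have hc : c * (1 - m + m * exp lam) ≤ 1 := calc
    c * (1 - m + m * exp lam) ≤ c * exp (m * lam + lam ^ 2 / 8) := by
      gcongr; exact one_sub_add_mul_exp_le_exp m hm lam
    _ = 1 := by rw [← exp_add, ← exp_zero]; ring_nf
  calc exp (lam * (x - m) - lam ^ 2 / 8) = c * exp (lam * x) := by rw [← exp_add]; ring_nf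
    _ ≤ c * (1 - x + x * exp lam) := by gcongr; exact exp_mul_le_one_sub_add_mul_exp lam hx
    _ ≤ 1 + c * (exp lam - 1) * (x - m) := by linear_combination hc
end
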